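/- Let R be the reflection operator Rφ(t,x) = φ(−t,−x). For every f ∈ L²(ℝ) one has the identity √2 (1 ± R) U₂ |∂_x|^{-1/4} f(t,x) = e^{ix|∂_t|^{1/2}} |∂_t|^{-3/8} f_±(t) + e^{-ix|∂_t|^{1/2}} |∂_t|^{-3/8} f*_±(t), where f_± and f*_± are defined on the Fourier side by f̂_±(η) = 2^{-1/2} |η|^{-1/4} ( 1_{(0,∞)}(η) f̂(|η|^{1/2}) ± 1_{(−∞,0)}(η) f̂(−|η|^{1/2}) ) and f̂*_±(η) = 2^{-1/2} |η|^{-1/4} ( 1_{(0,∞)}(η) f̂(−|η|^{1/2}) ± 1_{(−∞,0)}(η) f̂(|η|^{1/2}) ). -/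

import Mathlib

open MeasureTheory Complex Filter Set
open scoped ENNReal NNReal BigOperators

noncomputable section

/-- The Fourier transform with convention `f̂(ξ) = ∫ f(x) e^{-ixξ} dx`. -/
def fourierT (f : ℝ → ℂ) (ξ : ℝ) : ℂ :=
  ∫ x : ℝ, Complex.exp (-Complex.I * ((x * ξ : ℝ) : ℂ)) * f x

/-- `U₂ |∂_x|^{-1/4} f(t,x) = (2π)⁻¹ ∫ e^{i(xξ + tξ²)} |ξ|^{-1/4} f̂(ξ) dξ`. -/
def U2quarter (f : ℝ → ℂ) (t x : ℝ) : ℂ :=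
  (2 * Real.pi)⁻¹ •
    ∫ ξ : ℝ, Complex.exp (Complex.I * ((x * ξ + t * ξ ^ 2 : ℝ) : ℂ)) *
      ((|ξ| ^ (-(1:ℝ)/4) : ℝ) : ℂ) * fourierT f ξ

/-- `e^{iεx|∂_t|^{1/2}} |∂_t|^{-3/8}` applied (in the `t` variable) to the function with Fourier
transform `G`:  `(2π)⁻¹ ∫ e^{i(tη + εx|η|^{1/2})} |η|^{-3/8} G(η) dη`. -/
def halfWave (ε : ℝ) (G : ℝ → ℂ) (t x : ℝ) : ℂ :=
  (2 * Real.pi)⁻¹ •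
    ∫ η : ℝ, Complex.exp (Complex.I * ((t * η + ε * x * Real.sqrt |η| : ℝ) : ℂ)) *
      ((|η| ^ (-(3:ℝ)/8) : ℝ) : ℂ) * G η

/-- The Fourier transform of `f_±` (sign `s = ±1`):
`f̂_±(η) = 2^{-1/2} |η|^{-1/4} (1_{(0,∞)}(η) f̂(|η|^{1/2}) ± 1_{(-∞,0)}(η) f̂(-|η|^{1/2}))`. -/
def fPMhat (s : ℝ) (f : ℝ → ℂ) (η : ℝ) : ℂ :=
  (((Real.sqrt 2)⁻¹ * |η| ^ (-(1:ℝ)/4) : ℝ) : ℂ) *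
    (if 0 < η then fourierT f (Real.sqrt η)
     else (s : ℂ) * fourierT f (-Real.sqrt (-η)))

/-- The Fourier transform of `f*_±` (sign `s = ±1`):
`f̂*_±(η) = 2^{-1/2} |η|^{-1/4} (1_{(0,∞)}(η) f̂(-|η|^{1/2}) ± 1_{(-∞,0)}(η) f̂(|η|^{1/2}))`. -/
def fPMstarHat (s : ℝ) (f : ℝ → ℂ) (η : ℝ) : ℂ :=
  (((Real.sqrt 2)⁻¹ * |η| ^ (-(1:ℝ)/4) : ℝ) : ℂ) *
    (if 0 < η then fourierT f (-Real.sqrt η)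
     else (s : ℂ) * fourierT f (Real.sqrt (-η)))

lemma fourierT_eq (f : ℝ → ℂ) (ξ : ℝ) :
    fourierT f ξ = FourierTransform.fourier f (ξ / (2 * Real.pi)) := by
  rw [Real.fourier_eq']
  unfold fourierT
  congr 1
  ext v
  rw [smul_eq_mul]
  congr 1
  have h : -2 * Real.pi * (inner ℝ v (ξ / (2 * Real.pi)) : ℝ) = -(v * ξ) := by
    simp only [RCLike.inner_apply, starRingEnd_apply, star_trivial]
    field_simp
  rw [h]
  push_cast
  ring

lemma continuous_fourierT (f : ℝ → ℂ) (hf : Integrable f volume) :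
    Continuous (fourierT f) := by
  have h : Continuous (FourierTransform.fourier f : ℝ → ℂ) :=
    VectorFourier.fourierIntegral_continuous Real.continuous_fourierChar (innerSL ℝ).continuous₂ hf
  have he : fourierT f = fun ξ => FourierTransform.fourier f (ξ / (2 * Real.pi)) :=
    funext (fourierT_eq f)
  rw [he]
  exact h.comp (continuous_id.div_const _)

lemma two_mul_inv_sqrt_two : (2:ℝ) * (Real.sqrt 2)⁻¹ = Real.sqrt 2 := by
  have h : Real.sqrt 2 * Real.sqrt 2 = 2 := Real.mul_self_sqrt (by norm_num)
  have h0 : Real.sqrt 2 ≠ 0 := by positivity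
  field_simp
  rw [sq, h]

lemma scalar_key {u : ℝ} (hu : 0 < u) :
    (2*u) * ((u^2) ^ (-(3:ℝ)/8) * ((Real.sqrt 2)⁻¹ * (u^2) ^ (-(1:ℝ)/4)))
      = Real.sqrt 2 * u ^ (-(1:ℝ)/4) := by
  have e1 : (u^2 : ℝ) = u ^ ((2:ℕ):ℝ) := by rw [Real.rpow_natCast]
  rw [e1, ← Real.rpow_mul hu.le, ← Real.rpow_mul hu.le]
  rw [show ((2:ℕ):ℝ) * (-(3:ℝ)/8) = -(3:ℝ)/4 by norm_num,
     show ((2:ℕ):ℝ) * (-(1:ℝ)/4) = -(1:ℝ)/2 by norm_num]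
  have h1 : u ^ (-(3:ℝ)/4) * u = u ^ ((-(3:ℝ)/4) + 1) := (Real.rpow_add_one hu.ne' _).symm
  have h2 : u ^ ((-(3:ℝ)/4) + 1) * u ^ (-(1:ℝ)/2) = u ^ ((-(3:ℝ)/4) + 1 + (-(1:ℝ)/2)) :=
    (Real.rpow_add hu _ _).symm
  calc 2*u * (u ^ (-(3:ℝ)/4) * ((Real.sqrt 2)⁻¹ * u ^ (-(1:ℝ)/2)))
      = (2 * (Real.sqrt 2)⁻¹) * (u ^ (-(3:ℝ)/4) * u * u ^ (-(1:ℝ)/2)) := by ring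
    _ = Real.sqrt 2 * u ^ ((-(3:ℝ)/4) + 1 + (-(1:ℝ)/2)) := by rw [h1, h2, two_mul_inv_sqrt_two]
    _ = Real.sqrt 2 * u ^ (-(1:ℝ)/4) := by norm_num

lemma key_pos {ξ : ℝ} (hξ : 0 < ξ) :
    |2*ξ| * ((ξ^2) ^ (-(3:ℝ)/8) * ((Real.sqrt 2)⁻¹ * (ξ^2) ^ (-(1:ℝ)/4)))
      = Real.sqrt 2 * ξ ^ (-(1:ℝ)/4) := by
  rw [abs_of_pos (by linarith)]; exact scalar_key hξ

lemma key_neg {ξ : ℝ} (hξ : ξ < 0) :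
    |2*ξ| * ((ξ^2) ^ (-(3:ℝ)/8) * ((Real.sqrt 2)⁻¹ * (ξ^2) ^ (-(1:ℝ)/4)))
      = Real.sqrt 2 * (-ξ) ^ (-(1:ℝ)/4) := by
  have h := scalar_key (u := -ξ) (by linarith)
  rw [neg_sq] at h
  rw [abs_of_neg (by linarith)]
  linear_combination h

lemma arrange0 (E F : ℂ) (r a b c d : ℝ) (h : r * (a * b) = c * d) :
    r • (E * (a:ℂ) * ((b:ℂ) * F)) = (c:ℂ) * (E * (d:ℂ) * F) := by
  have h' : (r:ℂ) * ((a:ℂ) * (b:ℂ)) = (c:ℂ) * (d:ℂ) := by exact_mod_cast congrArg Complex.ofReal h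
  rw [Complex.real_smul]
  linear_combination E * F * h'

lemma arrange (E F : ℂ) (s' : ℂ) (r a b c d : ℝ) (h : r * (a * b) = c * d) :
    r • (E * (a:ℂ) * ((b:ℂ) * (s' * F))) = (c:ℂ) * s' * (E * (d:ℂ) * F) := by
  have h' : (r:ℂ) * ((a:ℂ) * (b:ℂ)) = (c:ℂ) * (d:ℂ) := by exact_mod_cast congrArg Complex.ofReal h
  rw [Complex.real_smul]
  linear_combination E * F * s' * h'

/-- The integrand of `U2quarter`. -/
def Aint (f : ℝ → ℂ) (t x : ℝ) : ℝ → ℂ := fun ξ =>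
  Complex.exp (Complex.I * ((x * ξ + t * ξ ^ 2 : ℝ) : ℂ)) *
    ((|ξ| ^ (-(1:ℝ)/4) : ℝ) : ℂ) * fourierT f ξ

/-- The integrand of `halfWave`. -/
def Hint (ε : ℝ) (G : ℝ → ℂ) (t x : ℝ) : ℝ → ℂ := fun η =>
  Complex.exp (Complex.I * ((t * η + ε * x * Real.sqrt |η| : ℝ) : ℂ)) *
    ((|η| ^ (-(3:ℝ)/8) : ℝ) : ℂ) * G η

lemma norm_exp_I_real (r : ℝ) : ‖Complex.exp (Complex.I * r)‖ = 1 := by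
  rw [Complex.norm_exp]
  simp

lemma integrable_Aint (f : ℝ → ℂ)
    (hfhat : Integrable (fun ξ : ℝ => (|ξ| ^ (-(1:ℝ)/4) : ℝ) • fourierT f ξ) volume)
    (t x : ℝ) : Integrable (Aint f t x) volume := by
  have heq : Aint f t x = fun ξ =>
      Complex.exp (Complex.I * ((x * ξ + t * ξ ^ 2 : ℝ) : ℂ)) *
        ((|ξ| ^ (-(1:ℝ)/4) : ℝ) • fourierT f ξ) := by
    funext ξ
    simp only [Aint]
    rw [Complex.real_smul, mul_assoc]
  rw [heq]
  refine hfhat.bdd_mul (c := 1) ?_ (ae_of_all _ fun ξ => le_of_eq (norm_exp_I_real _))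
  apply Continuous.aestronglyMeasurable
  fun_prop

lemma case_i (f : ℝ → ℂ) (s t x : ℝ) {ξ : ℝ} (hξ : 0 < ξ) :
    |2*ξ| • Hint 1 (fPMhat s f) t x (ξ^2)
      = ((Real.sqrt 2 : ℝ) : ℂ) * Aint f t x ξ := by
  unfold Hint Aint fPMhat
  rw [if_pos (pow_pos hξ 2)]
  rw [_root_.abs_of_nonneg (sq_nonneg ξ), Real.sqrt_sq hξ.le, _root_.abs_of_pos hξ]
  rw [show (t * ξ^2 + 1 * x * ξ : ℝ) = (x * ξ + t * ξ^2 : ℝ) by ring]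
  exact arrange0 _ _ _ _ _ _ _ (key_pos hξ)

lemma case_ii (f : ℝ → ℂ) (s t x : ℝ) {ξ : ℝ} (hξ : ξ < 0) :
    |2*ξ| • Hint (-1) (fPMstarHat s f) t x (ξ^2)
      = ((Real.sqrt 2 : ℝ) : ℂ) * Aint f t x ξ := by
  unfold Hint Aint fPMstarHat
  rw [if_pos (by nlinarith : (0:ℝ) < ξ^2)]
  rw [_root_.abs_of_nonneg (sq_nonneg ξ), Real.sqrt_sq_eq_abs, _root_.abs_of_neg hξ, neg_neg]
  rw [show (t * ξ^2 + (-1) * x * -ξ : ℝ) = (x * ξ + t * ξ^2 : ℝ) by ring]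
  exact arrange0 _ _ _ _ _ _ _ (key_neg hξ)

lemma case_iii (f : ℝ → ℂ) (s t x : ℝ) {ξ : ℝ} (hξ : 0 < ξ) :
    |(-(2*ξ))| • Hint (-1) (fPMstarHat s f) t x (-(ξ^2))
      = ((Real.sqrt 2 : ℝ) : ℂ) * (s : ℂ) * Aint f (-t) (-x) ξ := by
  unfold Hint Aint fPMstarHat
  rw [if_neg (not_lt.2 (neg_nonpos.2 (sq_nonneg ξ)))]
  simp only [abs_neg, neg_neg]
  rw [_root_.abs_of_nonneg (sq_nonneg ξ), Real.sqrt_sq hξ.le, _root_.abs_of_pos hξ]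
  rw [show (t * -(ξ^2) + (-1) * x * ξ : ℝ) = ((-x) * ξ + (-t) * ξ^2 : ℝ) by ring]
  exact arrange _ _ _ _ _ _ _ _ (key_pos hξ)

lemma case_iv (f : ℝ → ℂ) (s t x : ℝ) {ξ : ℝ} (hξ : ξ < 0) :
    |(-(2*ξ))| • Hint 1 (fPMhat s f) t x (-(ξ^2))
      = ((Real.sqrt 2 : ℝ) : ℂ) * (s : ℂ) * Aint f (-t) (-x) ξ := by
  unfold Hint Aint fPMhat
  rw [if_neg (not_lt.2 (neg_nonpos.2 (sq_nonneg ξ)))]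
  simp only [abs_neg, neg_neg]
  rw [_root_.abs_of_nonneg (sq_nonneg ξ), Real.sqrt_sq_eq_abs, _root_.abs_of_neg hξ, neg_neg]
  rw [show (t * -(ξ^2) + 1 * x * -ξ : ℝ) = ((-x) * ξ + (-t) * ξ^2 : ℝ) by ring]
  exact arrange _ _ _ _ _ _ _ _ (key_neg hξ)

lemma splitInt (G : ℝ → ℂ) (hio : IntegrableOn G (Iio 0) volume)
    (hoi : IntegrableOn G (Ioi 0) volume) :
    ∫ η, G η = (∫ η in Iio (0:ℝ), G η) + ∫ η in Ioi (0:ℝ), G η := by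
  have hIci : IntegrableOn G (Ici 0) volume := hoi.congr_set_ae Ioi_ae_eq_Ici.symm
  rw [← intervalIntegral.integral_Iio_add_Ici hio hIci]
  congr 1
  exact setIntegral_congr_set Ioi_ae_eq_Ici.symm

/-- **Lemma 4.2 (I)**: with `R` the reflection `Rφ(t,x) = φ(-t,-x)`, for every `f ∈ L²(ℝ)`
one has `√2 (1 ± R) U₂ |∂_x|^{-1/4} f(t,x)
  = e^{ix|∂_t|^{1/2}} |∂_t|^{-3/8} f_±(t) + e^{-ix|∂_t|^{1/2}} |∂_t|^{-3/8} f*_±(t)`. -/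
theorem reflection_identity (f : ℝ → ℂ)
    (hf : Integrable f volume)
    (hfhat : Integrable (fun ξ : ℝ => (|ξ| ^ (-(1:ℝ)/4) : ℝ) • fourierT f ξ) volume)
    (s : ℝ) (hs : s = 1 ∨ s = -1) :
    ∀ t x : ℝ,
      ((Real.sqrt 2 : ℝ) : ℂ) * (U2quarter f t x + (s : ℂ) * U2quarter f (-t) (-x))
        = halfWave 1 (fPMhat s f) t x + halfWave (-1) (fPMstarHat s f) t x := by
  intro t x
  have hA : Integrable (Aint f t x) volume := integrable_Aint f hfhat t x
  have hB : Integrable (Aint f (-t) (-x)) volume := integrable_Aint f hfhat (-t) (-x)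
  -- derivatives
  have hds : ∀ (S : Set ℝ), ∀ y ∈ S, HasDerivWithinAt (fun z : ℝ => z^2) (2*y) S y := by
    intro S y _
    exact ((by simpa using hasDerivAt_pow 2 y : HasDerivAt (fun z : ℝ => z^2) (2*y) y)).hasDerivWithinAt
  have hdn : ∀ (S : Set ℝ), ∀ y ∈ S, HasDerivWithinAt (fun z : ℝ => -(z^2)) (-(2*y)) S y := by
    intro S y _
    exact ((by simpa using hasDerivAt_pow 2 y : HasDerivAt (fun z : ℝ => z^2) (2*y) y)).neg.hasDerivWithinAt
  -- injectivity
  have hinj_pos : InjOn (fun z : ℝ => z^2) (Ioi 0) := by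
    intro a ha b hb h
    simp only [mem_Ioi] at ha hb
    simp only at h
    have h' : (a - b) * (a + b) = 0 := by linear_combination h
    rcases mul_eq_zero.1 h' with h'' | h'' <;> linarith
  have hinj_neg : InjOn (fun z : ℝ => z^2) (Iio 0) := by
    intro a ha b hb h
    simp only [mem_Iio] at ha hb
    simp only at h
    have h' : (a - b) * (a + b) = 0 := by linear_combination h
    rcases mul_eq_zero.1 h' with h'' | h'' <;> linarith
  have hinjn_pos : InjOn (fun z : ℝ => -(z^2)) (Ioi 0) :=
    fun a ha b hb h => hinj_pos ha hb (by simpa using neg_injective h)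
  have hinjn_neg : InjOn (fun z : ℝ => -(z^2)) (Iio 0) :=
    fun a ha b hb h => hinj_neg ha hb (by simpa using neg_injective h)
  -- images
  have himg1 : (fun z : ℝ => z^2) '' (Ioi 0) = Ioi 0 := by
    ext y
    simp only [mem_image, mem_Ioi]
    constructor
    · rintro ⟨a, ha, rfl⟩; positivity
    · intro hy; exact ⟨Real.sqrt y, Real.sqrt_pos.2 hy, Real.sq_sqrt hy.le⟩
  have himg2 : (fun z : ℝ => z^2) '' (Iio 0) = Ioi 0 := by
    ext y
    simp only [mem_image, mem_Iio, mem_Ioi]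
    constructor
    · rintro ⟨a, ha, rfl⟩; nlinarith
    · intro hy
      refine ⟨-Real.sqrt y, neg_lt_zero.2 (Real.sqrt_pos.2 hy), ?_⟩
      rw [neg_sq]; exact Real.sq_sqrt hy.le
  have himg3 : (fun z : ℝ => -(z^2)) '' (Ioi 0) = Iio 0 := by
    ext y
    simp only [mem_image, mem_Ioi, mem_Iio]
    constructor
    · rintro ⟨a, ha, rfl⟩; nlinarith
    · intro hy
      refine ⟨Real.sqrt (-y), Real.sqrt_pos.2 (by linarith), ?_⟩
      rw [Real.sq_sqrt (by linarith : (0:ℝ) ≤ -y)]; ring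
  have himg4 : (fun z : ℝ => -(z^2)) '' (Iio 0) = Iio 0 := by
    ext y
    simp only [mem_image, mem_Iio]
    constructor
    · rintro ⟨a, ha, rfl⟩; nlinarith
    · intro hy
      refine ⟨-Real.sqrt (-y), neg_lt_zero.2 (Real.sqrt_pos.2 (by linarith)), ?_⟩
      rw [neg_sq, Real.sq_sqrt (by linarith : (0:ℝ) ≤ -y)]; ring
  -- change of variables for the four pieces
  have e1 : ∫ η in Ioi (0:ℝ), (Hint 1 (fPMhat s f) t x) η = ((Real.sqrt 2 : ℝ) : ℂ) * ∫ ξ in Ioi (0:ℝ), (Aint f t x) ξ := by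
    have := integral_image_eq_integral_abs_deriv_smul measurableSet_Ioi (hds (Ioi 0)) hinj_pos (Hint 1 (fPMhat s f) t x)
    rw [himg1] at this
    rw [this,
      setIntegral_congr_fun measurableSet_Ioi (fun ξ hξ => case_i f s t x (mem_Ioi.1 hξ)),
      integral_const_mul]
  have e2 : ∫ η in Iio (0:ℝ), (Hint 1 (fPMhat s f) t x) η
      = (((Real.sqrt 2 : ℝ) : ℂ) * (s:ℂ)) * ∫ ξ in Iio (0:ℝ), (Aint f (-t) (-x)) ξ := by
    have := integral_image_eq_integral_abs_deriv_smul measurableSet_Iio (hdn (Iio 0)) hinjn_neg (Hint 1 (fPMhat s f) t x)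
    rw [himg4] at this
    rw [this,
      setIntegral_congr_fun measurableSet_Iio (fun ξ hξ => case_iv f s t x (mem_Iio.1 hξ)),
      integral_const_mul]
  have e3 : ∫ η in Ioi (0:ℝ), (Hint (-1) (fPMstarHat s f) t x) η = ((Real.sqrt 2 : ℝ) : ℂ) * ∫ ξ in Iio (0:ℝ), (Aint f t x) ξ := by
    have := integral_image_eq_integral_abs_deriv_smul measurableSet_Iio (hds (Iio 0)) hinj_neg (Hint (-1) (fPMstarHat s f) t x)
    rw [himg2] at this
    rw [this,
      setIntegral_congr_fun measurableSet_Iio (fun ξ hξ => case_ii f s t x (mem_Iio.1 hξ)),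
      integral_const_mul]
  have e4 : ∫ η in Iio (0:ℝ), (Hint (-1) (fPMstarHat s f) t x) η
      = (((Real.sqrt 2 : ℝ) : ℂ) * (s:ℂ)) * ∫ ξ in Ioi (0:ℝ), (Aint f (-t) (-x)) ξ := by
    have := integral_image_eq_integral_abs_deriv_smul measurableSet_Ioi (hdn (Ioi 0)) hinjn_pos (Hint (-1) (fPMstarHat s f) t x)
    rw [himg3] at this
    rw [this,
      setIntegral_congr_fun measurableSet_Ioi (fun ξ hξ => case_iii f s t x (mem_Ioi.1 hξ)),
      integral_const_mul]
  -- integrability of the pieces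
  have i1oi : IntegrableOn (Hint 1 (fPMhat s f) t x) (Ioi 0) volume := by
    have hiff := integrableOn_image_iff_integrableOn_abs_deriv_smul measurableSet_Ioi
      (hds (Ioi 0)) hinj_pos (Hint 1 (fPMhat s f) t x)
    rw [himg1] at hiff
    rw [hiff]
    exact ((hA.const_mul _).integrableOn).congr_fun
      (fun ξ hξ => (case_i f s t x (mem_Ioi.1 hξ)).symm) measurableSet_Ioi
  have i1io : IntegrableOn (Hint 1 (fPMhat s f) t x) (Iio 0) volume := by
    have hiff := integrableOn_image_iff_integrableOn_abs_deriv_smul measurableSet_Iio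
      (hdn (Iio 0)) hinjn_neg (Hint 1 (fPMhat s f) t x)
    rw [himg4] at hiff
    rw [hiff]
    exact (((hB.const_mul _).integrableOn).congr_fun
      (fun ξ hξ => (case_iv f s t x (mem_Iio.1 hξ)).symm) measurableSet_Iio)
  have i2oi : IntegrableOn (Hint (-1) (fPMstarHat s f) t x) (Ioi 0) volume := by
    have hiff := integrableOn_image_iff_integrableOn_abs_deriv_smul measurableSet_Iio
      (hds (Iio 0)) hinj_neg (Hint (-1) (fPMstarHat s f) t x)
    rw [himg2] at hiff
    rw [hiff]
    exact ((hA.const_mul _).integrableOn).congr_fun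
      (fun ξ hξ => (case_ii f s t x (mem_Iio.1 hξ)).symm) measurableSet_Iio
  have i2io : IntegrableOn (Hint (-1) (fPMstarHat s f) t x) (Iio 0) volume := by
    have hiff := integrableOn_image_iff_integrableOn_abs_deriv_smul measurableSet_Ioi
      (hdn (Ioi 0)) hinjn_pos (Hint (-1) (fPMstarHat s f) t x)
    rw [himg3] at hiff
    rw [hiff]
    exact ((hB.const_mul _).integrableOn).congr_fun
      (fun ξ hξ => (case_iii f s t x (mem_Ioi.1 hξ)).symm) measurableSet_Ioi
  -- splitting the integrals
  have hH1 : ∫ η, (Hint 1 (fPMhat s f) t x) η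
      = (((Real.sqrt 2 : ℝ) : ℂ) * (s:ℂ)) * (∫ ξ in Iio (0:ℝ), (Aint f (-t) (-x)) ξ)
        + ((Real.sqrt 2 : ℝ) : ℂ) * ∫ ξ in Ioi (0:ℝ), (Aint f t x) ξ := by
    rw [splitInt (Hint 1 (fPMhat s f) t x) i1io i1oi, e1, e2]
  have hH2 : ∫ η, (Hint (-1) (fPMstarHat s f) t x) η
      = ((Real.sqrt 2 : ℝ) : ℂ) * (∫ ξ in Iio (0:ℝ), (Aint f t x) ξ)
        + (((Real.sqrt 2 : ℝ) : ℂ) * (s:ℂ)) * ∫ ξ in Ioi (0:ℝ), (Aint f (-t) (-x)) ξ := by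
    rw [splitInt (Hint (-1) (fPMstarHat s f) t x) i2io i2oi, e3, e4]
    ring
  have hAsplit : ∫ ξ, (Aint f t x) ξ = (∫ ξ in Iio (0:ℝ), (Aint f t x) ξ) + ∫ ξ in Ioi (0:ℝ), (Aint f t x) ξ :=
    splitInt (Aint f t x) hA.integrableOn hA.integrableOn
  have hBsplit : ∫ ξ, (Aint f (-t) (-x)) ξ = (∫ ξ in Iio (0:ℝ), (Aint f (-t) (-x)) ξ) + ∫ ξ in Ioi (0:ℝ), (Aint f (-t) (-x)) ξ :=
    splitInt (Aint f (-t) (-x)) hB.integrableOn hB.integrableOn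
  -- reassemble
  have hU1 : U2quarter f t x = (2 * Real.pi)⁻¹ • ∫ ξ, (Aint f t x) ξ := rfl
  have hU2 : U2quarter f (-t) (-x) = (2 * Real.pi)⁻¹ • ∫ ξ, (Aint f (-t) (-x)) ξ := rfl
  have hW1 : halfWave 1 (fPMhat s f) t x = (2 * Real.pi)⁻¹ • ∫ η, (Hint 1 (fPMhat s f) t x) η := rfl
  have hW2 : halfWave (-1) (fPMstarHat s f) t x = (2 * Real.pi)⁻¹ • ∫ η, (Hint (-1) (fPMstarHat s f) t x) η := rfl
  rw [hU1, hU2, hW1, hW2, hH1, hH2, hAsplit, hBsplit]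
  simp only [Complex.real_smul]
  ring
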